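/- If G is an HZ-graph with maximum degree Δ ≥ 3, then every vertex of G has degree Δ or Δ−1, i.e., the minimum degree of G is Δ−1. -/

import Mathlib

open SimpleGraph

/-- A proper edge coloring of `G` with `k` colors. -/
def IsProperEdgeColoring {V : Type*} (G : SimpleGraph V) (k : ℕ) (C : Sym2 V → ℕ) : Prop :=
  (∀ e ∈ G.edgeSet, C e < k) ∧
    ∀ e₁ ∈ G.edgeSet, ∀ e₂ ∈ G.edgeSet, e₁ ≠ e₂ → (∃ v, v ∈ e₁ ∧ v ∈ e₂) → C e₁ ≠ C e₂

/-- The chromatic index of `G`. -/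
noncomputable def chromaticIndex {V : Type*} (G : SimpleGraph V) : ℕ :=
  sInf {k | ∃ C, IsProperEdgeColoring G k C}

namespace HZ

set_option linter.unusedSectionVars false
variable {V : Type*} [Fintype V] [DecidableEq V]

/-- colorability with k colors -/
def EC (G : SimpleGraph V) (k : ℕ) : Prop := ∃ C, IsProperEdgeColoring G k C

/-- the set of colors missing at `v` -/
noncomputable def miss (Hp : SimpleGraph V) (Δ : ℕ) (φ : Sym2 V → ℕ) (v : V) : Finset ℕ :=
  @Finset.filter _ (fun c => ∀ w, Hp.Adj v w → φ s(v, w) ≠ c) (Classical.decPred _)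
    (Finset.range Δ)

lemma mem_miss {Hp : SimpleGraph V} {Δ : ℕ} {φ : Sym2 V → ℕ} {v : V} {c : ℕ} :
    c ∈ miss Hp Δ φ v ↔ c < Δ ∧ ∀ w, Hp.Adj v w → φ s(v, w) ≠ c := by
  unfold miss
  simp [Finset.mem_filter]

lemma miss_lt {Hp : SimpleGraph V} {Δ : ℕ} {φ : Sym2 V → ℕ} {v : V} {c : ℕ}
    (h : c ∈ miss Hp Δ φ v) : c < Δ := (mem_miss.1 h).1

lemma proper_at {Hp : SimpleGraph V} {Δ : ℕ} {φ : Sym2 V → ℕ}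
    (h : IsProperEdgeColoring Hp Δ φ) {v w w' : V} (h1 : Hp.Adj v w) (h2 : Hp.Adj v w')
    (hne : w ≠ w') : φ s(v, w) ≠ φ s(v, w') := by
  refine h.2 _ (by rwa [mem_edgeSet]) _ (by rwa [mem_edgeSet]) ?_ ⟨v, by simp, by simp⟩
  intro he
  rw [Sym2.congr_right] at he
  exact hne he

lemma proper_mono {H1 H2 : SimpleGraph V} {Δ : ℕ} {φ : Sym2 V → ℕ} (hle : H1 ≤ H2)
    (h : IsProperEdgeColoring H2 Δ φ) : IsProperEdgeColoring H1 Δ φ := by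
  have hss : H1.edgeSet ⊆ H2.edgeSet := edgeSet_mono hle
  exact ⟨fun e he => h.1 e (hss he), fun e₁ h₁ e₂ h₂ => h.2 e₁ (hss h₁) e₂ (hss h₂)⟩

lemma miss_anti {H1 H2 : SimpleGraph V} {Δ : ℕ} {φ : Sym2 V → ℕ} (hle : H1 ≤ H2) {v c}
    (h : c ∈ miss H2 Δ φ v) : c ∈ miss H1 Δ φ v := by
  rw [mem_miss] at h ⊢
  exact ⟨h.1, fun w hw => h.2 w (hle hw)⟩

lemma card_miss {Hp : SimpleGraph V} {Δ : ℕ} {φ : Sym2 V → ℕ} {v : V} :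
    Δ ≤ (miss Hp Δ φ v).card + (Hp.neighborSet v).ncard := by
  classical
  have hfin : (Hp.neighborSet v).Finite := Set.toFinite _
  set s : Finset V := hfin.toFinset with hs
  have hcard : (Hp.neighborSet v).ncard = s.card := (Set.ncard_eq_toFinset_card _ hfin)
  set img : Finset ℕ := s.image (fun w => φ s(v, w)) with himg
  have hsub : Finset.range Δ ⊆ miss Hp Δ φ v ∪ img := by
    intro c hc
    rw [Finset.mem_range] at hc
    by_cases hm : ∀ w, Hp.Adj v w → φ s(v, w) ≠ c
    · exact Finset.mem_union_left _ (mem_miss.2 ⟨hc, hm⟩)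
    · push_neg at hm
      obtain ⟨w, hw, hww⟩ := hm
      refine Finset.mem_union_right _ ?_
      rw [himg, Finset.mem_image]
      exact ⟨w, by simp [hs, Set.Finite.mem_toFinset, hw], hww⟩
  calc Δ = (Finset.range Δ).card := (Finset.card_range Δ).symm
    _ ≤ (miss Hp Δ φ v ∪ img).card := Finset.card_le_card hsub
    _ ≤ (miss Hp Δ φ v).card + img.card := Finset.card_union_le _ _
    _ ≤ (miss Hp Δ φ v).card + s.card := by
        exact Nat.add_le_add_left Finset.card_image_le _
    _ = _ := by rw [hcard]

set_option linter.unusedSectionVars false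

lemma edge_eq {Hp : SimpleGraph V} {e : Sym2 V} {u : V} (he : e ∈ Hp.edgeSet) (hu : u ∈ e) :
    ∃ w, Hp.Adj u w ∧ e = s(u, w) := by
  induction e with
  | _ p q =>
    rw [Sym2.mem_iff] at hu
    rw [mem_edgeSet] at he
    rcases hu with rfl | rfl
    · exact ⟨q, he, rfl⟩
    · exact ⟨p, he.symm, Sym2.eq_swap⟩

/-- The key extension lemma: a coloring of `H - ab` missing `c` at both `a,b` extends. -/
lemma proper_update {H : SimpleGraph V} {Δ : ℕ} {φ : Sym2 V → ℕ} {a b : V} (hab : H.Adj a b)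
    (hφ : IsProperEdgeColoring (H.deleteEdges {s(a, b)}) Δ φ) {c : ℕ}
    (hca : c ∈ miss (H.deleteEdges {s(a, b)}) Δ φ a)
    (hcb : c ∈ miss (H.deleteEdges {s(a, b)}) Δ φ b) :
    IsProperEdgeColoring H Δ (Function.update φ s(a, b) c) := by
  set Hp := H.deleteEdges {s(a, b)} with hHp
  have hedge : ∀ e ∈ H.edgeSet, e ≠ s(a, b) → e ∈ Hp.edgeSet := by
    intro e he hne
    rw [hHp, edgeSet_deleteEdges]
    exact ⟨he, by simpa using hne⟩
  have hshare : ∀ e ∈ Hp.edgeSet, (∃ v, v ∈ e ∧ v ∈ s(a, b)) → φ e ≠ c := by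
    rintro e he ⟨v, hve, hvab⟩
    rw [Sym2.mem_iff] at hvab
    obtain ⟨w, hw, rfl⟩ := edge_eq he hve
    rcases hvab with rfl | rfl
    · exact (mem_miss.1 hca).2 w hw
    · exact (mem_miss.1 hcb).2 w hw
  constructor
  · intro e he
    by_cases h : e = s(a, b)
    · subst h; rw [Function.update_self]; exact (mem_miss.1 hca).1
    · rw [Function.update_of_ne h]; exact hφ.1 e (hedge e he h)
  · intro e₁ h₁ e₂ h₂ hne hshare'
    by_cases he1 : e₁ = s(a, b)
    · subst he1
      have he2 : e₂ ∈ Hp.edgeSet := hedge e₂ h₂ (fun h => hne h.symm)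
      rw [Function.update_self, Function.update_of_ne (fun h => hne h.symm)]
      obtain ⟨v, hv1, hv2⟩ := hshare'
      exact fun h => hshare e₂ he2 ⟨v, hv2, hv1⟩ h.symm
    · by_cases he2 : e₂ = s(a, b)
      · subst he2
        have he1' : e₁ ∈ Hp.edgeSet := hedge e₁ h₁ he1
        rw [Function.update_self, Function.update_of_ne he1]
        obtain ⟨v, hv1, hv2⟩ := hshare'
        exact hshare e₁ he1' ⟨v, hv1, hv2⟩
      · rw [Function.update_of_ne he1, Function.update_of_ne he2]
        exact hφ.2 e₁ (hedge e₁ h₁ he1) e₂ (hedge e₂ h₂ he2) hne hshare'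
lemma miss_update_not_mem {Hp : SimpleGraph V} {Δ : ℕ} {φ : Sym2 V → ℕ} {e₀ : Sym2 V} {c : ℕ}
    {v : V} (hv : v ∉ e₀) : miss Hp Δ (Function.update φ e₀ c) v = miss Hp Δ φ v := by
  ext d
  rw [mem_miss, mem_miss]
  have key : ∀ w, Hp.Adj v w → Function.update φ e₀ c s(v, w) = φ s(v, w) := by
    intro w _
    apply Function.update_of_ne
    intro h; exact hv (h ▸ Sym2.mem_mk_left v w)
  constructor
  · rintro ⟨h1, h2⟩
    exact ⟨h1, fun w hw => by rw [← key w hw]; exact h2 w hw⟩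
  · rintro ⟨h1, h2⟩
    exact ⟨h1, fun w hw => by rw [key w hw]; exact h2 w hw⟩

/-- After recoloring edge `s(y,z)` (present in `Hp`) to a new color, the old color `φ s(y,z)`
becomes missing at `y`. -/
lemma old_missing {Hp : SimpleGraph V} {Δ : ℕ} {φ : Sym2 V → ℕ} {y z : V}
    (hφ : IsProperEdgeColoring Hp Δ φ) (hyz : Hp.Adj y z) {c : ℕ} (hc : c ≠ φ s(y, z)) :
    φ s(y, z) ∈ miss Hp Δ (Function.update φ s(y, z) c) y := by
  rw [mem_miss]
  refine ⟨hφ.1 _ (by rwa [mem_edgeSet]), ?_⟩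
  intro w hw
  by_cases h : s(y, w) = s(y, z)
  · rw [h, Function.update_self]; exact hc
  · rw [Function.update_of_ne h]
    have : w ≠ z := fun hh => h (by rw [hh])
    exact proper_at hφ hw hyz this

/-! ### Kempe chains -/

section Kempe

variable (Hp : SimpleGraph V) (φ : Sym2 V → ℕ) (γ β : ℕ)

/-- The subgraph of edges colored `γ` or `β`. -/
def kgraph : SimpleGraph V where
  Adj a b := Hp.Adj a b ∧ (φ s(a, b) = γ ∨ φ s(a, b) = β)
  symm := by
    refine ⟨?_⟩
    intro a b ⟨h1, h2⟩
    exact ⟨h1.symm, by rwa [Sym2.eq_swap] at h2⟩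
  loopless := ⟨fun a ⟨h, _⟩ => Hp.irrefl h⟩

def swapc (c : ℕ) : ℕ := if c = γ then β else if c = β then γ else c

open scoped Classical in
/-- Swap colors `γ`,`β` on the Kempe component of `u₀`. -/
noncomputable def kswap (u₀ : V) (e : Sym2 V) : ℕ :=
  if e ∈ (kgraph Hp φ γ β).edgeSet ∧ (∃ a ∈ e, (kgraph Hp φ γ β).Reachable u₀ a) then
    swapc γ β (φ e)
  else φ e

variable {Hp φ γ β}

lemma swapc_inj (hγβ : γ ≠ β) : Function.Injective (swapc γ β) := by
  intro c d
  unfold swapc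
  split_ifs <;> omega

lemma swapc_lt {Δ c : ℕ} (hγ : γ < Δ) (hβ : β < Δ) (hc : c < Δ) : swapc γ β c < Δ := by
  unfold swapc; split_ifs <;> omega

lemma mem_K_edgeSet {e : Sym2 V} (he : e ∈ Hp.edgeSet) (hc : φ e = γ ∨ φ e = β) :
    e ∈ (kgraph Hp φ γ β).edgeSet := by
  induction e with
  | _ p q => exact ⟨he, hc⟩

lemma K_edge_color {e : Sym2 V} (he : e ∈ (kgraph Hp φ γ β).edgeSet) :
    φ e = γ ∨ φ e = β := by
  induction e with
  | _ p q => exact he.2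

lemma K_edge_hp {e : Sym2 V} (he : e ∈ (kgraph Hp φ γ β).edgeSet) : e ∈ Hp.edgeSet := by
  induction e with
  | _ p q => exact he.1

lemma K_edge_reach {e : Sym2 V} (he : e ∈ (kgraph Hp φ γ β).edgeSet) {a b : V}
    (ha : a ∈ e) (hb : b ∈ e) : (kgraph Hp φ γ β).Reachable a b := by
  induction e with
  | _ p q =>
    have hadj : (kgraph Hp φ γ β).Adj p q := he
    rw [Sym2.mem_iff] at ha hb
    rcases ha with rfl | rfl <;> rcases hb with rfl | rfl
    · rfl
    · exact hadj.reachable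
    · exact hadj.symm.reachable
    · rfl

/-- the "changed" predicate localizes at any vertex of the edge -/
lemma changed_iff {u₀ v : V} {e : Sym2 V} (hv : v ∈ e) :
    (e ∈ (kgraph Hp φ γ β).edgeSet ∧ (∃ a ∈ e, (kgraph Hp φ γ β).Reachable u₀ a)) ↔
      (e ∈ (kgraph Hp φ γ β).edgeSet ∧ (kgraph Hp φ γ β).Reachable u₀ v) := by
  constructor
  · rintro ⟨he, a, ha, hr⟩
    exact ⟨he, hr.trans (K_edge_reach he ha hv)⟩
  · rintro ⟨he, hr⟩
    exact ⟨he, v, hv, hr⟩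

lemma kswap_eq_of_not_colored {u₀ : V} {e : Sym2 V} (h : φ e ≠ γ) (h' : φ e ≠ β) :
    kswap Hp φ γ β u₀ e = φ e := by
  classical
  unfold kswap
  rw [if_neg (by
    rintro ⟨he, -⟩
    rcases K_edge_color he with hc | hc
    · exact h hc
    · exact h' hc)]

lemma kswap_eq_at {u₀ v w : V} (hv : ¬ (kgraph Hp φ γ β).Reachable u₀ v) :
    kswap Hp φ γ β u₀ s(v, w) = φ s(v, w) := by
  classical
  unfold kswap
  rw [if_neg (fun hch => hv ((changed_iff (Sym2.mem_mk_left v w)).1 hch).2)]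

lemma kswap_eq_swapc {u₀ : V} {e : Sym2 V} (he : e ∈ (kgraph Hp φ γ β).edgeSet)
    {v : V} (hv : v ∈ e) (hr : (kgraph Hp φ γ β).Reachable u₀ v) :
    kswap Hp φ γ β u₀ e = swapc γ β (φ e) := by
  classical
  unfold kswap
  rw [if_pos ⟨he, v, hv, hr⟩]

end Kempe

section KempeLemmas

variable {Hp : SimpleGraph V} {φ : Sym2 V → ℕ} {γ β : ℕ} {Δ : ℕ} {u₀ : V}

lemma kswap_proper (hφ : IsProperEdgeColoring Hp Δ φ) (hγβ : γ ≠ β)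
    (hγ : γ < Δ) (hβ : β < Δ) :
    IsProperEdgeColoring Hp Δ (kswap Hp φ γ β u₀) := by
  classical
  set K := kgraph Hp φ γ β with hK
  have hP : ∀ e : Sym2 V, e ∈ Hp.edgeSet → (∃ v, v ∈ e ∧ v ∈ e) → True := fun _ _ _ => trivial
  constructor
  · intro e he
    by_cases hch : e ∈ K.edgeSet ∧ (∃ a ∈ e, K.Reachable u₀ a)
    · obtain ⟨a, ha, hr⟩ := hch.2
      rw [kswap_eq_swapc hch.1 ha hr]
      exact swapc_lt hγ hβ (hφ.1 e he)
    · have : kswap Hp φ γ β u₀ e = φ e := by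
        unfold kswap; rw [if_neg hch]
      rw [this]; exact hφ.1 e he
  · intro e₁ h₁ e₂ h₂ hne hsh
    obtain ⟨v, hv1, hv2⟩ := hsh
    -- changedness propagates through shared vertices
    have prop : ∀ e e' : Sym2 V, (e ∈ K.edgeSet ∧ (∃ a ∈ e, K.Reachable u₀ a)) →
        v ∈ e → v ∈ e' → e' ∈ K.edgeSet → (e' ∈ K.edgeSet ∧ (∃ a ∈ e', K.Reachable u₀ a)) := by
      intro e e' hch hve hve' he'
      have hr : K.Reachable u₀ v := ((changed_iff hve).1 hch).2
      exact ⟨he', v, hve', hr⟩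
    by_cases hc1 : e₁ ∈ K.edgeSet ∧ (∃ a ∈ e₁, K.Reachable u₀ a) <;>
      by_cases hc2 : e₂ ∈ K.edgeSet ∧ (∃ a ∈ e₂, K.Reachable u₀ a)
    · obtain ⟨a1, ha1, hr1⟩ := hc1.2
      obtain ⟨a2, ha2, hr2⟩ := hc2.2
      rw [kswap_eq_swapc hc1.1 ha1 hr1, kswap_eq_swapc hc2.1 ha2 hr2]
      intro h
      exact hφ.2 e₁ h₁ e₂ h₂ hne ⟨v, hv1, hv2⟩ (swapc_inj hγβ h)
    · -- e₁ changed, e₂ not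
      have he2K : e₂ ∉ K.edgeSet := fun h => hc2 (prop e₁ e₂ hc1 hv1 hv2 h)
      have he2c : φ e₂ ≠ γ ∧ φ e₂ ≠ β := by
        constructor <;> (intro h; exact he2K (mem_K_edgeSet h₂ (by tauto)))
      obtain ⟨a1, ha1, hr1⟩ := hc1.2
      rw [kswap_eq_swapc hc1.1 ha1 hr1, kswap_eq_of_not_colored he2c.1 he2c.2]
      have h1c := K_edge_color hc1.1
      unfold swapc
      split_ifs <;> tauto
    · -- e₂ changed, e₁ not
      have he1K : e₁ ∉ K.edgeSet := fun h => hc1 (prop e₂ e₁ hc2 hv2 hv1 h)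
      have he1c : φ e₁ ≠ γ ∧ φ e₁ ≠ β := by
        constructor <;> (intro h; exact he1K (mem_K_edgeSet h₁ (by tauto)))
      obtain ⟨a2, ha2, hr2⟩ := hc2.2
      rw [kswap_eq_swapc hc2.1 ha2 hr2, kswap_eq_of_not_colored he1c.1 he1c.2]
      have h2c := K_edge_color hc2.1
      unfold swapc
      split_ifs <;> tauto
    · have e1eq : kswap Hp φ γ β u₀ e₁ = φ e₁ := by unfold kswap; rw [if_neg hc1]
      have e2eq : kswap Hp φ γ β u₀ e₂ = φ e₂ := by unfold kswap; rw [if_neg hc2]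
      rw [e1eq, e2eq]
      exact hφ.2 e₁ h₁ e₂ h₂ hne ⟨v, hv1, hv2⟩

/-- missing sets don't change outside the swapped component -/
lemma miss_kswap_not_reachable {v : V} (hv : ¬ (kgraph Hp φ γ β).Reachable u₀ v) :
    miss Hp Δ (kswap Hp φ γ β u₀) v = miss Hp Δ φ v := by
  ext d
  rw [mem_miss, mem_miss]
  constructor
  · rintro ⟨h1, h2⟩
    exact ⟨h1, fun w hw => by rw [← kswap_eq_at hv]; exact h2 w hw⟩
  · rintro ⟨h1, h2⟩
    exact ⟨h1, fun w hw => by rw [kswap_eq_at hv]; exact h2 w hw⟩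

/-- missing of colors other than `γ,β` is invariant under the swap -/
lemma miss_kswap_other {v : V} {c : ℕ} (hcγ : c ≠ γ) (hcβ : c ≠ β) :
    c ∈ miss Hp Δ (kswap Hp φ γ β u₀) v ↔ c ∈ miss Hp Δ φ v := by
  classical
  have key : ∀ w, Hp.Adj v w → (kswap Hp φ γ β u₀ s(v, w) = c ↔ φ s(v, w) = c) := by
    intro w hw
    by_cases hch : s(v, w) ∈ (kgraph Hp φ γ β).edgeSet ∧
        (∃ a ∈ s(v, w), (kgraph Hp φ γ β).Reachable u₀ a)
    · obtain ⟨a, ha, hr⟩ := hch.2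
      rw [kswap_eq_swapc hch.1 ha hr]
      have := K_edge_color hch.1
      unfold swapc
      split_ifs <;> constructor <;> (intro h; omega)
    · have : kswap Hp φ γ β u₀ s(v, w) = φ s(v, w) := by unfold kswap; rw [if_neg hch]
      rw [this]
  rw [mem_miss, mem_miss]
  constructor
  · rintro ⟨h1, h2⟩
    exact ⟨h1, fun w hw => fun h => h2 w hw ((key w hw).2 h)⟩
  · rintro ⟨h1, h2⟩
    exact ⟨h1, fun w hw => fun h => h2 w hw ((key w hw).1 h)⟩

/-- on the swapped component, if `γ` was missing then `β` is missing afterwards. -/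
lemma miss_kswap_swap (hφ : IsProperEdgeColoring Hp Δ φ)
    (hβ : β < Δ) {v : V} (hr : (kgraph Hp φ γ β).Reachable u₀ v)
    (h : γ ∈ miss Hp Δ φ v) : β ∈ miss Hp Δ (kswap Hp φ γ β u₀) v := by
  classical
  rw [mem_miss]
  refine ⟨hβ, ?_⟩
  intro w hw
  by_cases hch : s(v, w) ∈ (kgraph Hp φ γ β).edgeSet ∧
      (∃ a ∈ s(v, w), (kgraph Hp φ γ β).Reachable u₀ a)
  · obtain ⟨a, ha, hra⟩ := hch.2
    rw [kswap_eq_swapc hch.1 ha hra]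
    have hcol := K_edge_color hch.1
    have hne : φ s(v, w) ≠ γ := (mem_miss.1 h).2 w hw
    have : φ s(v, w) = β := by tauto
    rw [this]
    unfold swapc
    split_ifs <;> omega
  · have heq : kswap Hp φ γ β u₀ s(v, w) = φ s(v, w) := by unfold kswap; rw [if_neg hch]
    rw [heq]
    intro hb
    apply hch
    refine ⟨mem_K_edgeSet (by rwa [mem_edgeSet]) (Or.inr hb), v, Sym2.mem_mk_left v w, hr⟩

/-- a vertex missing `γ` has at most one neighbor in the Kempe graph. -/
lemma K_unique_nbr (hφ : IsProperEdgeColoring Hp Δ φ) {v : V} (h : γ ∈ miss Hp Δ φ v)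
    {w w' : V} (h1 : (kgraph Hp φ γ β).Adj v w) (h2 : (kgraph Hp φ γ β).Adj v w') : w = w' := by
  by_contra hne
  have hc1 := h1.2
  have hc2 := h2.2
  have hm1 : φ s(v, w) ≠ γ := (mem_miss.1 h).2 w h1.1
  have hm2 : φ s(v, w') ≠ γ := (mem_miss.1 h).2 w' h2.1
  have : φ s(v, w) = φ s(v, w') := by
    rcases hc1 with e | e <;> rcases hc2 with f | f <;> omega
  exact proper_at hφ h1.1 h2.1 hne this

/-- the Kempe graph has maximum degree 2. -/
lemma K_max_two (hφ : IsProperEdgeColoring Hp Δ φ) {v w₁ w₂ w₃ : V}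
    (h1 : (kgraph Hp φ γ β).Adj v w₁) (h2 : (kgraph Hp φ γ β).Adj v w₂)
    (h3 : (kgraph Hp φ γ β).Adj v w₃)
    (h12 : w₁ ≠ w₂) (h13 : w₁ ≠ w₃) (h23 : w₂ ≠ w₃) : False := by
  have p12 := proper_at hφ h1.1 h2.1 h12
  have p13 := proper_at hφ h1.1 h3.1 h13
  have p23 := proper_at hφ h2.1 h3.1 h23
  have c1 := h1.2; have c2 := h2.2; have c3 := h3.2
  rcases c1 with e1 | e1 <;> rcases c2 with e2 | e2 <;> rcases c3 with e3 | e3 <;> omega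

end KempeLemmas

/-! ### components of max-degree-2 graphs -/

section Paths

variable {K : SimpleGraph V}

lemma closed_reach {S : Set V} (hS : ∀ v ∈ S, ∀ w, K.Adj v w → w ∈ S) :
    ∀ {u u' : V}, K.Reachable u u' → u ∈ S → u' ∈ S := by
  intro u u' hr
  obtain ⟨p⟩ := hr
  induction p with
  | nil => exact fun h => h
  | cons h q ih => exact fun hu => ih (hS _ hu _ h)

lemma internal_two {a b v : V} (p : K.Walk a b) (hp : p.IsPath) (hv : v ∈ p.support)
    (hva : v ≠ a) (hvb : v ≠ b) :
    ∃ w₁ w₂, K.Adj v w₁ ∧ K.Adj v w₂ ∧ w₁ ≠ w₂ ∧ w₁ ∈ p.support ∧ w₂ ∈ p.support := by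
  set q := p.takeUntil v hv with hqdef
  set r := p.dropUntil v hv with hrdef
  obtain ⟨w₁, h1, t1, ht1⟩ := SimpleGraph.Walk.exists_eq_cons_of_ne hva q.reverse
  obtain ⟨w₂, h2, t2, ht2⟩ := SimpleGraph.Walk.exists_eq_cons_of_ne hvb r
  have hw1q : w₁ ∈ q.support := by
    have : w₁ ∈ q.reverse.support := by
      rw [ht1, SimpleGraph.Walk.support_cons]
      exact List.mem_cons_of_mem _ t1.start_mem_support
    rwa [SimpleGraph.Walk.support_reverse, List.mem_reverse] at this
  have hw2r : w₂ ∈ r.support.tail := by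
    rw [ht2, SimpleGraph.Walk.support_cons]
    exact t2.start_mem_support
  have hnodup : (q.support ++ r.support.tail).Nodup := by
    have := hp.support_nodup
    rw [← SimpleGraph.Walk.take_spec p hv, SimpleGraph.Walk.support_append] at this
    exact this
  have hne : w₁ ≠ w₂ := by
    intro h
    exact (List.disjoint_of_nodup_append hnodup) hw1q (h ▸ hw2r)
  refine ⟨w₁, w₂, h1, h2, hne, ?_, ?_⟩
  · exact SimpleGraph.Walk.support_takeUntil_subset p hv hw1q
  · exact SimpleGraph.Walk.support_dropUntil_subset p hv (List.mem_of_mem_tail hw2r)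

lemma support_closed {a b : V} (p : K.Walk a b) (hp : p.IsPath) (hab : a ≠ b)
    (h1a : ∀ w w', K.Adj a w → K.Adj a w' → w = w')
    (h1b : ∀ w w', K.Adj b w → K.Adj b w' → w = w')
    (hmax : ∀ v w₁ w₂ w₃, K.Adj v w₁ → K.Adj v w₂ → K.Adj v w₃ →
      w₁ ≠ w₂ → w₁ ≠ w₃ → w₂ ≠ w₃ → False) :
    ∀ v ∈ p.support, ∀ w, K.Adj v w → w ∈ p.support := by
  intro v hv w hw
  by_cases hva : v = a
  · subst hva
    obtain ⟨w₀, h0, t0, ht0⟩ := SimpleGraph.Walk.exists_eq_cons_of_ne hab p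
    have hw0 : w₀ ∈ p.support := by
      rw [ht0, SimpleGraph.Walk.support_cons]
      exact List.mem_cons_of_mem _ t0.start_mem_support
    rwa [h1a w w₀ hw h0]
  · by_cases hvb : v = b
    · subst hvb
      obtain ⟨w₀, h0, t0, ht0⟩ :=
        SimpleGraph.Walk.exists_eq_cons_of_ne (Ne.symm hab) p.reverse
      have hw0 : w₀ ∈ p.support := by
        have : w₀ ∈ p.reverse.support := by
          rw [ht0, SimpleGraph.Walk.support_cons]
          exact List.mem_cons_of_mem _ t0.start_mem_support
        rwa [SimpleGraph.Walk.support_reverse, List.mem_reverse] at this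
      rwa [h1b w w₀ hw h0]
    · obtain ⟨w₁, w₂, hw1, hw2, hne, hm1, hm2⟩ := internal_two p hp hv hva hvb
      by_cases h1 : w = w₁
      · exact h1 ▸ hm1
      · by_cases h2 : w = w₂
        · exact h2 ▸ hm2
        · exact absurd (hmax v w w₁ w₂ hw hw1 hw2 h1 h2 hne) (fun h => h)

lemma three_endpoints
    (hmax : ∀ v w₁ w₂ w₃, K.Adj v w₁ → K.Adj v w₂ → K.Adj v w₃ →
      w₁ ≠ w₂ → w₁ ≠ w₃ → w₂ ≠ w₃ → False)
    {a b c : V}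
    (h1a : ∀ w w', K.Adj a w → K.Adj a w' → w = w')
    (h1b : ∀ w w', K.Adj b w → K.Adj b w' → w = w')
    (h1c : ∀ w w', K.Adj c w → K.Adj c w' → w = w')
    (hab : a ≠ b) (hac : a ≠ c) (hbc : b ≠ c)
    (rab : K.Reachable a b) (rac : K.Reachable a c) : False := by
  obtain ⟨p0⟩ := rab
  set p : K.Walk a b := (p0.toPath : K.Path a b).1 with hpdef
  have hp : p.IsPath := (p0.toPath : K.Path a b).2
  have hclosed := support_closed p hp hab h1a h1b hmax
  have hcS : c ∈ p.support := by
    refine closed_reach (S := {v | v ∈ p.support}) ?_ rac p.start_mem_support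
    intro v hv w hw
    exact hclosed v hv w hw
  obtain ⟨w₁, w₂, hw1, hw2, hne, -, -⟩ :=
    internal_two p hp hcS (Ne.symm hac) (Ne.symm hbc)
  exact hne (h1c w₁ w₂ hw1 hw2)

end Paths

/-! ### Vizing multifans -/

section Fan

variable {H : SimpleGraph V} {Δ : ℕ} {x y : V}

/-- `H` with the edge `xy` removed -/
abbrev HD (H : SimpleGraph V) (x y : V) : SimpleGraph V := H.deleteEdges {s(x, y)}

/-- A multifan at `y` with respect to the uncolored edge `xy` and the coloring `φ`.
The list is ordered with the most recently added vertex first; the last element is `x`. -/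
inductive IsFan (H : SimpleGraph V) (Δ : ℕ) (x y : V) (φ : Sym2 V → ℕ) : List V → Prop
  | base : IsFan H Δ x y φ [x]
  | cons {z : V} {l : List V} (hfan : IsFan H Δ x y φ l) (hadj : H.Adj y z) (hz : z ∉ l)
      (hc : ∃ w ∈ l, φ s(y, z) ∈ miss (HD H x y) Δ φ w) : IsFan H Δ x y φ (z :: l)

lemma fan_ne_nil {φ : Sym2 V → ℕ} {l : List V} (hf : IsFan H Δ x y φ l) : l ≠ [] := by
  cases hf <;> simp

lemma x_mem_fan {φ : Sym2 V → ℕ} {l : List V} (hf : IsFan H Δ x y φ l) : x ∈ l := by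
  induction hf with
  | base => simp
  | cons hf hadj hz hc ih => exact List.mem_cons_of_mem _ ih

lemma fan_nodup {φ : Sym2 V → ℕ} {l : List V} (hf : IsFan H Δ x y φ l) : l.Nodup := by
  induction hf with
  | base => simp
  | cons hf hadj hz hc ih => exact List.nodup_cons.2 ⟨by assumption, ih⟩

lemma fan_mem_adj (hxy : H.Adj x y) {φ : Sym2 V → ℕ} {l : List V} (hf : IsFan H Δ x y φ l)
    {z : V} (hz : z ∈ l) : H.Adj y z := by
  induction hf with
  | base => rw [List.mem_singleton] at hz; subst hz; exact hxy.symm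
  | cons hf hadj hz' hc ih =>
    rcases List.mem_cons.1 hz with rfl | h
    · assumption
    · exact ih h

lemma fan_mem_ne_y (hxy : H.Adj x y) {φ : Sym2 V → ℕ} {l : List V} (hf : IsFan H Δ x y φ l)
    {z : V} (hz : z ∈ l) : z ≠ y := fun h => by
  exact H.irrefl (h ▸ (fan_mem_adj hxy hf hz)).symm

lemma sym2_ne (hxy : H.Adj x y) {z : V} (hzx : z ≠ x) : s(y, z) ≠ s(x, y) := by
  intro h
  rw [Sym2.eq_iff] at h
  rcases h with ⟨h1, h2⟩ | ⟨h1, h2⟩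
  · exact (H.ne_of_adj hxy).symm h1
  · exact hzx h2

lemma fan_mem_hp_adj (hxy : H.Adj x y) {φ : Sym2 V → ℕ} {l : List V} (hf : IsFan H Δ x y φ l)
    {z : V} (hz : z ∈ l) (hzx : z ≠ x) : (HD H x y).Adj y z := by
  rw [deleteEdges_adj]
  exact ⟨fan_mem_adj hxy hf hz, by simpa using sym2_ne hxy hzx⟩

lemma fan_suffix {φ : Sym2 V → ℕ} {l : List V} (hf : IsFan H Δ x y φ l) :
    ∀ {z : V} {m : List V}, (z :: m) <:+ l → IsFan H Δ x y φ (z :: m) := by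
  induction hf with
  | base =>
    intro z m hs
    have := hs.length_le
    simp at this
    have : z :: m = [x] := List.IsSuffix.eq_of_length hs (by simpa using this)
    rw [this]; exact IsFan.base
  | cons hf hadj hz hc ih =>
    intro z' m hs
    rcases List.suffix_cons_iff.1 hs with h | h
    · cases h
      exact IsFan.cons hf hadj hz hc
    · exact ih h

lemma fan_mem_suffix {φ : Sym2 V → ℕ} {l : List V} (hf : IsFan H Δ x y φ l) {z : V}
    (hz : z ∈ l) : ∃ t, (z :: t) <:+ l ∧ IsFan H Δ x y φ (z :: t) := by
  obtain ⟨t1, t2, h⟩ := List.append_of_mem hz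
  have hs : (z :: t2) <:+ l := ⟨t1, by rw [h]⟩
  exact ⟨t2, hs, fan_suffix hf hs⟩

lemma fan_transfer {φ ψ : Sym2 V → ℕ} {l : List V} (hf : IsFan H Δ x y φ l)
    (h : ∀ z m, (z :: m) <:+ l → m ≠ [] → ∃ w ∈ m, ψ s(y, z) ∈ miss (HD H x y) Δ ψ w) :
    IsFan H Δ x y ψ l := by
  induction hf with
  | base => exact IsFan.base
  | cons hf hadj hz hc ih =>
    refine IsFan.cons (ih fun z' m hs hm => h z' m (hs.trans (List.suffix_cons _ _)) hm)
      hadj hz ?_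
    exact h _ _ List.suffix_rfl (fan_ne_nil hf)

end Fan

section FanMain

variable {H : SimpleGraph V} {Δ : ℕ} {x y : V}

lemma proper_update_inner {Hp : SimpleGraph V} {φ : Sym2 V → ℕ}
    (hφ : IsProperEdgeColoring Hp Δ φ) {u v : V} (huv : Hp.Adj u v) {c : ℕ}
    (hcu : c ∈ miss Hp Δ φ u) (hcv : c ∈ miss Hp Δ φ v) :
    IsProperEdgeColoring Hp Δ (Function.update φ s(u, v) c) := by
  have h1 : IsProperEdgeColoring (Hp.deleteEdges {s(u, v)}) Δ φ :=
    proper_mono (Hp.deleteEdges_le _) hφ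
  have h2 := miss_anti (Hp.deleteEdges_le {s(u, v)}) hcu
  have h3 := miss_anti (Hp.deleteEdges_le {s(u, v)}) hcv
  exact proper_update huv h1 h2 h3

/-- mirror image of `K_unique_nbr`: a vertex missing `β` has at most one Kempe neighbor. -/
lemma K_unique_nbr' {Hp : SimpleGraph V} {φ : Sym2 V → ℕ} {γ β : ℕ}
    (hφ : IsProperEdgeColoring Hp Δ φ) {v : V} (h : β ∈ miss Hp Δ φ v)
    {w w' : V} (h1 : (kgraph Hp φ γ β).Adj v w) (h2 : (kgraph Hp φ γ β).Adj v w') : w = w' := by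
  by_contra hne
  have hc1 := h1.2
  have hc2 := h2.2
  have hm1 : φ s(v, w) ≠ β := (mem_miss.1 h).2 w h1.1
  have hm2 : φ s(v, w') ≠ β := (mem_miss.1 h).2 w' h2.1
  have : φ s(v, w) = φ s(v, w') := by
    rcases hc1 with e | e <;> rcases hc2 with f | f <;> omega
  exact proper_at hφ h1.1 h2.1 hne this

variable (hxy : H.Adj x y) (hH : ¬ EC H Δ) (hdeg : ∀ v, (H.neighborSet v).ncard ≤ Δ)

include hxy hH in
lemma no_extend {φ : Sym2 V → ℕ} (hφ : IsProperEdgeColoring (HD H x y) Δ φ) {c : ℕ}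
    (hcx : c ∈ miss (HD H x y) Δ φ x) (hcy : c ∈ miss (HD H x y) Δ φ y) : False := by
  apply hH
  refine ⟨Function.update φ s(x, y) c, proper_update hxy hφ hcx hcy⟩

include hxy hdeg in
lemma miss_y_nonempty {φ : Sym2 V → ℕ} :
    ∃ β, β ∈ miss (HD H x y) Δ φ y := by
  have hx : x ∈ H.neighborSet y := hxy.symm
  have hsub : (HD H x y).neighborSet y ⊆ H.neighborSet y \ {x} := by
    intro v hv
    rw [mem_neighborSet, deleteEdges_adj] at hv
    refine ⟨hv.1, ?_⟩
    simp only [Set.mem_singleton_iff]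
    intro h
    subst h
    exact hv.2 (by simp [Set.mem_singleton_iff, Sym2.eq_swap])
  have h1 : ((HD H x y).neighborSet y).ncard ≤ (H.neighborSet y \ {x}).ncard :=
    Set.ncard_le_ncard hsub (Set.toFinite _)
  have h2 : (H.neighborSet y \ {x}).ncard = (H.neighborSet y).ncard - 1 :=
    Set.ncard_diff_singleton_of_mem hx
  have h3 : 1 ≤ (H.neighborSet y).ncard :=
    (Set.ncard_pos (Set.toFinite _)).2 ⟨x, hx⟩
  have h4 := hdeg y
  have h5 := card_miss (Hp := HD H x y) (Δ := Δ) (φ := φ) (v := y)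
  have hpos : 0 < (miss (HD H x y) Δ φ y).card := by omega
  obtain ⟨β, hβ⟩ := Finset.card_pos.1 hpos
  exact ⟨β, hβ⟩

end FanMain

section FanDisjoint

variable {H : SimpleGraph V} {Δ : ℕ} {x y : V}

/-- pairwise disjointness of missing color sets over `y` and a fan -/
def FanDisj (H : SimpleGraph V) (Δ : ℕ) (x y : V) (φ : Sym2 V → ℕ) (l : List V) : Prop :=
  ∀ a ∈ y :: l, ∀ b ∈ y :: l, a ≠ b →
    ∀ c, c ∈ miss (HD H x y) Δ φ a → c ∈ miss (HD H x y) Δ φ b → False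

variable (hxy : H.Adj x y) (hH : ¬ EC H Δ) (hdeg : ∀ v, (H.neighborSet v).ncard ≤ Δ)

include hxy hH in
lemma case_one {n : ℕ}
    (IH : ∀ (φ : Sym2 V → ℕ) (l : List V), IsProperEdgeColoring (HD H x y) Δ φ →
      IsFan H Δ x y φ l → l.length ≤ n → FanDisj H Δ x y φ l)
    {φ : Sym2 V → ℕ} {z : V} {l' : List V} (hφ : IsProperEdgeColoring (HD H x y) Δ φ)
    (hf : IsFan H Δ x y φ (z :: l')) (hlen : l'.length ≤ n)
    {c : ℕ} (hcz : c ∈ miss (HD H x y) Δ φ z) (hcy : c ∈ miss (HD H x y) Δ φ y) : False := by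
  cases hf with
  | base => exact no_extend hxy hH hφ hcz hcy
  | cons hf' hadj hz hc =>
    have hzx : z ≠ x := fun h => hz (h ▸ x_mem_fan hf')
    have hyz : (HD H x y).Adj y z := by
      rw [deleteEdges_adj]
      exact ⟨hadj, by simpa using sym2_ne hxy hzx⟩
    have hcα : c ≠ φ s(y, z) := fun h => (mem_miss.1 hcy).2 z hyz h.symm
    set φ' := Function.update φ s(y, z) c with hφ'def
    have hφ' : IsProperEdgeColoring (HD H x y) Δ φ' := proper_update_inner hφ hyz hcy hcz
    have hαy : φ s(y, z) ∈ miss (HD H x y) Δ φ' y := old_missing hφ hyz hcα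
    obtain ⟨w, hwl, hwα⟩ := hc
    have hwy : w ≠ y := fan_mem_ne_y hxy hf' hwl
    have hwz : w ≠ z := fun h => hz (h ▸ hwl)
    have hmissw : ∀ u, u ≠ y → u ≠ z → miss (HD H x y) Δ φ' u = miss (HD H x y) Δ φ u := by
      intro u h1 h2
      apply miss_update_not_mem
      rw [Sym2.mem_iff]
      tauto
    have hf'' : IsFan H Δ x y φ' l' := by
      apply fan_transfer hf'
      intro z' m hs hm
      have hfz' : IsFan H Δ x y φ (z' :: m) := fan_suffix hf' hs
      cases hfz' with
      | base => exact absurd rfl hm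
      | cons hf0 hadj0 hz0 hc0 =>
        obtain ⟨w', hw'm, hw'c⟩ := hc0
        have hz'z : z' ≠ z := fun h => hz (h ▸ hs.subset (List.mem_cons_self (a := z') (l := m)))
        have heq : φ' s(y, z') = φ s(y, z') :=
          Function.update_of_ne (fun h => hz'z (Sym2.congr_right.1 h)) _ _
        have hw'l : w' ∈ l' := hs.subset (List.mem_cons_of_mem _ hw'm)
        have hw'y : w' ≠ y := fan_mem_ne_y hxy hf' hw'l
        have hw'z : w' ≠ z := fun h => hz (h ▸ hw'l)
        rw [heq]
        exact ⟨w', hw'm, by rw [hmissw w' hw'y hw'z]; exact hw'c⟩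
    refine IH φ' l' hφ' hf'' hlen w (List.mem_cons_of_mem _ hwl) y (List.mem_cons_self)
      hwy (φ s(y, z)) ?_ hαy
    rw [hmissw w hwy hwz]
    exact hwα

include hxy hH hdeg in
lemma case_two {n : ℕ}
    (IH : ∀ (φ : Sym2 V → ℕ) (l : List V), IsProperEdgeColoring (HD H x y) Δ φ →
      IsFan H Δ x y φ l → l.length ≤ n → FanDisj H Δ x y φ l)
    {φ : Sym2 V → ℕ} {z : V} {l' : List V} (hφ : IsProperEdgeColoring (HD H x y) Δ φ)
    (hf : IsFan H Δ x y φ (z :: l')) (hlen : l'.length ≤ n)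
    {zi : V} (hzi : zi ∈ l') {γ : ℕ} (hγz : γ ∈ miss (HD H x y) Δ φ z)
    (hγi : γ ∈ miss (HD H x y) Δ φ zi) : False := by
  cases hf with
  | base => exact absurd hzi (List.not_mem_nil)
  | cons hf' hadj hz hc =>
    have hfull : IsFan H Δ x y φ (z :: l') := IsFan.cons hf' hadj hz hc
    have hD : FanDisj H Δ x y φ l' := IH φ l' hφ hf' hlen
    have hziy : zi ≠ y := fan_mem_ne_y hxy hf' hzi
    have hzzi : z ≠ zi := fun h => hz (h ▸ hzi)
    have hzy : z ≠ y := (H.ne_of_adj hadj).symm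
    have hzx : z ≠ x := fun h => hz (h ▸ x_mem_fan hf')
    obtain ⟨β, hβ⟩ := miss_y_nonempty hxy hdeg (φ := φ) (Δ := Δ)
    have hγβ : γ ≠ β := fun h =>
      hD zi (List.mem_cons_of_mem _ hzi) y (List.mem_cons_self) hziy γ hγi (h ▸ hβ)
    have hγΔ : γ < Δ := miss_lt hγz
    have hβΔ : β < Δ := miss_lt hβ
    have h1y : ∀ w w', (kgraph (HD H x y) φ γ β).Adj y w →
        (kgraph (HD H x y) φ γ β).Adj y w' → w = w' := fun w w' h1 h2 =>
      K_unique_nbr' hφ hβ h1 h2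
    have h1z : ∀ w w', (kgraph (HD H x y) φ γ β).Adj z w →
        (kgraph (HD H x y) φ γ β).Adj z w' → w = w' := fun w w' h1 h2 =>
      K_unique_nbr hφ hγz h1 h2
    have h1zi : ∀ w w', (kgraph (HD H x y) φ γ β).Adj zi w →
        (kgraph (HD H x y) φ γ β).Adj zi w' → w = w' := fun w w' h1 h2 =>
      K_unique_nbr hφ hγi h1 h2
    have hnb : ¬ ((kgraph (HD H x y) φ γ β).Reachable y z ∧
        (kgraph (HD H x y) φ γ β).Reachable y zi) := by
      rintro ⟨r1, r2⟩
      exact three_endpoints (fun v w₁ w₂ w₃ a1 a2 a3 => K_max_two hφ a1 a2 a3)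
        h1y h1z h1zi (Ne.symm hzy) (Ne.symm hziy) hzzi r1 r2
    by_cases hRzi : (kgraph (HD H x y) φ γ β).Reachable y zi
    · -- swap the component of z
      have hRz : ¬ (kgraph (HD H x y) φ γ β).Reachable y z := fun h => hnb ⟨h, hRzi⟩
      have hRzy : ¬ (kgraph (HD H x y) φ γ β).Reachable z y := fun h => hRz h.symm
      set ψ := kswap (HD H x y) φ γ β z with hψdef
      have hψ : IsProperEdgeColoring (HD H x y) Δ ψ := kswap_proper hφ hγβ hγΔ hβΔ
      have hβz : β ∈ miss (HD H x y) Δ ψ z :=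
        miss_kswap_swap hφ hβΔ (Reachable.refl z) hγz
      have hβy : β ∈ miss (HD H x y) Δ ψ y := by
        rw [hψdef, miss_kswap_not_reachable hRzy]; exact hβ
      have hRzzi : ¬ (kgraph (HD H x y) φ γ β).Reachable z zi := fun h =>
        hRz (hRzi.trans h.symm)
      have hγzi' : γ ∈ miss (HD H x y) Δ ψ zi := by
        rw [hψdef, miss_kswap_not_reachable hRzzi]; exact hγi
      have hedges : ∀ w : V, ψ s(y, w) = φ s(y, w) := fun w => kswap_eq_at hRzy
      have hfψ : IsFan H Δ x y ψ (z :: l') := by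
        apply fan_transfer hfull
        intro z' m hs hm
        have hfz' : IsFan H Δ x y φ (z' :: m) := fan_suffix hfull hs
        cases hfz' with
        | base => exact absurd rfl hm
        | cons hf0 hadj0 hz0 hc0 =>
          obtain ⟨w, hwm, hwc⟩ := hc0
          have hwl' : w ∈ l' := by
            rcases List.suffix_cons_iff.1 hs with he | he
            · rw [List.cons_eq_cons] at he
              exact he.2 ▸ hwm
            · exact he.subset (List.mem_cons_of_mem _ hwm)
          rw [hedges z']
          by_cases hcol : φ s(y, z') = γ
          · have hwzi : w = zi := by
              by_contra hne
              exact hD w (List.mem_cons_of_mem _ hwl') zi (List.mem_cons_of_mem _ hzi)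
                hne γ (hcol ▸ hwc) hγi
            exact ⟨zi, hwzi ▸ hwm, by rw [hcol]; exact hγzi'⟩
          · have hz'x : z' ≠ x := fun h => hz0 (h ▸ x_mem_fan hf0)
            have hcolβ : φ s(y, z') ≠ β := by
              intro h
              exact (mem_miss.1 hβ).2 z'
                (fan_mem_hp_adj hxy hfull (hs.subset (List.mem_cons_self (a := z') (l := m))) hz'x) h
            exact ⟨w, hwm, (miss_kswap_other hcol hcolβ).2 hwc⟩
      exact case_one hxy hH IH hψ hfψ hlen hβz hβy
    · -- swap the component of zi
      have hRziy : ¬ (kgraph (HD H x y) φ γ β).Reachable zi y := fun h => hRzi h.symm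
      set ψ := kswap (HD H x y) φ γ β zi with hψdef
      have hψ : IsProperEdgeColoring (HD H x y) Δ ψ := kswap_proper hφ hγβ hγΔ hβΔ
      have hβzi : β ∈ miss (HD H x y) Δ ψ zi :=
        miss_kswap_swap hφ hβΔ (Reachable.refl zi) hγi
      have hβy : β ∈ miss (HD H x y) Δ ψ y := by
        rw [hψdef, miss_kswap_not_reachable hRziy]; exact hβ
      obtain ⟨t, hsuf, hft⟩ := fan_mem_suffix hf' hzi
      have hftψ : IsFan H Δ x y ψ (zi :: t) := by
        apply fan_transfer hft
        intro z' m hs hm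
        have hfz' : IsFan H Δ x y φ (z' :: m) := fan_suffix hft hs
        cases hfz' with
        | base => exact absurd rfl hm
        | cons hf0 hadj0 hz0 hc0 =>
          obtain ⟨w, hwm, hwc⟩ := hc0
          have hz'x : z' ≠ x := fun h => hz0 (h ▸ x_mem_fan hf0)
          have hz'l' : z' ∈ l' := hsuf.subset (hs.subset (List.mem_cons_self (a := z') (l := m)))
          have hcolβ : φ s(y, z') ≠ β :=
            (mem_miss.1 hβ).2 z' (fan_mem_hp_adj hxy hf' hz'l' hz'x)
          have hcolγ : φ s(y, z') ≠ γ := by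
            intro h
            have hwl' : w ∈ l' := hsuf.subset (hs.subset (List.mem_cons_of_mem _ hwm))
            by_cases hwzi : w = zi
            · have hzit : zi ∉ t := (List.nodup_cons.1 (fan_nodup hft)).1
              rcases List.suffix_cons_iff.1 hs with he | he
              · rw [List.cons_eq_cons] at he
                exact hzit (he.2 ▸ (hwzi ▸ hwm))
              · exact hzit (he.subset (List.mem_cons_of_mem _ (hwzi ▸ hwm)))
            · exact hD w (List.mem_cons_of_mem _ hwl') zi (List.mem_cons_of_mem _ hzi)
                hwzi γ (h ▸ hwc) hγi
          rw [hψdef, kswap_eq_of_not_colored hcolγ hcolβ]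
          exact ⟨w, hwm, (miss_kswap_other hcolγ hcolβ).2 hwc⟩
      have hlent : (zi :: t).length ≤ n := le_trans hsuf.length_le hlen
      exact IH ψ (zi :: t) hψ hftψ hlent zi (List.mem_cons_of_mem _ (List.mem_cons_self))
        y (List.mem_cons_self) hziy β hβzi hβy

include hxy hH hdeg in
theorem fan_disjoint : ∀ (n : ℕ) (φ : Sym2 V → ℕ) (l : List V),
    IsProperEdgeColoring (HD H x y) Δ φ → IsFan H Δ x y φ l → l.length ≤ n →
    FanDisj H Δ x y φ l := by
  intro n
  induction n with
  | zero =>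
    intro φ l hφ hf hlen
    have h1 := fan_ne_nil hf
    have h2 : l = [] := List.length_eq_zero_iff.1 (Nat.le_zero.1 hlen)
    exact absurd h2 h1
  | succ n ih =>
    intro φ l hφ hf hlen a ha b hb hab c hca hcb
    cases hf with
    | base =>
      simp only [List.mem_cons, List.mem_singleton, List.not_mem_nil, or_false] at ha hb
      rcases ha with rfl | rfl <;> rcases hb with rfl | rfl
      · exact hab rfl
      · exact no_extend hxy hH hφ hcb hca
      · exact no_extend hxy hH hφ hca hcb
      · exact hab rfl
    | @cons z l' hf' hadj hz hc =>
      have hfull : IsFan H Δ x y φ (z :: l') := IsFan.cons hf' hadj hz hc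
      have hlen' : l'.length ≤ n := by
        simp only [List.length_cons] at hlen
        omega
      by_cases haz : a = z
      · subst haz
        rcases List.mem_cons.1 hb with rfl | hb'
        · exact case_one hxy hH ih hφ hfull hlen' hca hcb
        rcases List.mem_cons.1 hb' with rfl | hb''
        · exact absurd rfl hab
        · exact case_two hxy hH hdeg ih hφ hfull hlen' hb'' hca hcb
      · by_cases hbz : b = z
        · subst hbz
          rcases List.mem_cons.1 ha with rfl | ha'
          · exact case_one hxy hH ih hφ hfull hlen' hcb hca
          rcases List.mem_cons.1 ha' with rfl | ha''
          · exact absurd rfl (Ne.symm hab)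
          · exact case_two hxy hH hdeg ih hφ hfull hlen' ha'' hcb hca
        · -- both in y :: l'
          have ha' : a ∈ y :: l' := by
            rcases List.mem_cons.1 ha with rfl | ha'
            · exact List.mem_cons_self
            rcases List.mem_cons.1 ha' with rfl | ha''
            · exact absurd rfl haz
            · exact List.mem_cons_of_mem _ ha''
          have hb' : b ∈ y :: l' := by
            rcases List.mem_cons.1 hb with rfl | hb'
            · exact List.mem_cons_self
            rcases List.mem_cons.1 hb' with rfl | hb''
            · exact absurd rfl hbz
            · exact List.mem_cons_of_mem _ hb''
          exact ih φ l' hφ hf' hlen' a ha' b hb' hab c hca hcb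

end FanDisjoint

section VAL

variable {H : SimpleGraph V} {Δ : ℕ} {x y : V}

lemma HD_nbr_x (hxy : H.Adj x y) : (HD H x y).neighborSet x = H.neighborSet x \ {y} := by
  ext v
  simp only [mem_neighborSet, deleteEdges_adj, Set.mem_diff, Set.mem_singleton_iff,
    Set.mem_setOf_eq]
  constructor
  · rintro ⟨h1, h2⟩
    refine ⟨h1, fun h => h2 ?_⟩
    subst h
    simp
  · rintro ⟨h1, h2⟩
    refine ⟨h1, fun h => ?_⟩
    simp only [Set.mem_singleton_iff, Sym2.eq_iff] at h
    rcases h with ⟨h3, h4⟩ | ⟨h3, h4⟩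
    · exact h2 h4
    · exact (H.ne_of_adj hxy) h3

/-- Vizing's Adjacency Lemma, for a graph `H` that is not `Δ`-edge-colorable while `H - xy`
is: `y` has at least `Δ - d(x) + 1` neighbors of degree `Δ` other than `x`. -/
theorem VAL (hxy : H.Adj x y) (hH : ¬ EC H Δ) (hdeg : ∀ v, (H.neighborSet v).ncard ≤ Δ)
    (hφex : ∃ φ, IsProperEdgeColoring (HD H x y) Δ φ) :
    Δ + 1 ≤ (H.neighborSet x).ncard +
      {z : V | H.Adj y z ∧ (H.neighborSet z).ncard = Δ ∧ z ≠ x}.ncard := by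
  classical
  obtain ⟨φ, hφ⟩ := hφex
  set Hp := HD H x y with hHp
  -- pick a maximum-length fan
  set P : ℕ → Prop := fun k => ∃ l, IsFan H Δ x y φ l ∧ l.length = k with hP
  have hP1 : P 1 := ⟨[x], IsFan.base, rfl⟩
  have hcard1 : 1 ≤ Fintype.card V := Fintype.card_pos_iff.2 ⟨x⟩
  set N := Nat.findGreatest P (Fintype.card V) with hN
  have hPN : P N := Nat.findGreatest_spec hcard1 hP1
  obtain ⟨l, hfl, hlenl⟩ := hPN
  have hmax : ∀ k ≤ Fintype.card V, P k → k ≤ N := fun k hk hp => Nat.le_findGreatest hk hp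
  set T := l.toFinset with hT
  have hxT : x ∈ T := List.mem_toFinset.2 (x_mem_fan hfl)
  have hdisj := fan_disjoint hxy hH hdeg l.length φ l hφ hfl le_rfl
  -- disjointness of the missing sets
  set B := T.biUnion (fun w => miss Hp Δ φ w) with hB
  have hBcard : B.card = ∑ w ∈ T, (miss Hp Δ φ w).card := by
    apply Finset.card_biUnion
    intro u hu v hv huv
    rw [Function.onFun, Finset.disjoint_left]
    intro c hcu hcv
    exact hdisj u (List.mem_cons_of_mem _ (List.mem_toFinset.1 hu))
      v (List.mem_cons_of_mem _ (List.mem_toFinset.1 hv)) huv c hcu hcv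
  -- each color in B appears on an edge from y to a fan vertex other than x
  have hrep : ∀ c ∈ B, ∃ u, Hp.Adj y u ∧ φ s(y, u) = c := by
    intro c hc
    obtain ⟨w, hw, hcw⟩ := Finset.mem_biUnion.1 hc
    have hwy : w ≠ y := fan_mem_ne_y hxy hfl (List.mem_toFinset.1 hw)
    have hcy : c ∉ miss Hp Δ φ y := fun h =>
      hdisj w (List.mem_cons_of_mem _ (List.mem_toFinset.1 hw)) y (List.mem_cons_self)
        hwy c hcw h
    rw [mem_miss] at hcy
    push_neg at hcy
    obtain ⟨u, hu, huc⟩ := hcy (miss_lt hcw)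
    exact ⟨u, hu, huc⟩
  set f : ℕ → V := fun c =>
    if h : ∃ u, Hp.Adj y u ∧ φ s(y, u) = c then h.choose else x with hf
  have hfspec : ∀ c ∈ B, Hp.Adj y (f c) ∧ φ s(y, f c) = c := by
    intro c hc
    obtain ⟨u, hu⟩ := hrep c hc
    rw [hf]
    simp only
    rw [dif_pos ⟨u, hu⟩]
    exact (Exists.choose_spec (⟨u, hu⟩ : ∃ u, Hp.Adj y u ∧ φ s(y, u) = c))
  have hfmem : ∀ c ∈ B, f c ∈ T.erase x := by
    intro c hc
    have hspec := hfspec c hc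
    have hfx : f c ≠ x := by
      intro h
      have := hspec.1
      rw [h, hHp] at this
      rw [deleteEdges_adj] at this
      exact this.2 (by simp [Sym2.eq_swap])
    refine Finset.mem_erase.2 ⟨hfx, ?_⟩
    by_contra hmem
    -- extend the fan
    have hnew : IsFan H Δ x y φ (f c :: l) := by
      refine IsFan.cons hfl (deleteEdges_adj.1 hspec.1).1
        (fun h => hmem (List.mem_toFinset.2 h)) ?_
      obtain ⟨w, hw, hcw⟩ := Finset.mem_biUnion.1 hc
      exact ⟨w, List.mem_toFinset.1 hw, by rw [hspec.2]; exact hcw⟩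
    have hlennew : (f c :: l).length ≤ Fintype.card V := by
      rw [← List.toFinset_card_of_nodup (fan_nodup hnew)]
      exact Finset.card_le_card (Finset.subset_univ _)
    have := hmax _ hlennew ⟨_, hnew, rfl⟩
    rw [← hlenl] at this
    simp only [List.length_cons] at this
    omega
  have hinj : Set.InjOn f B := by
    intro c hc c' hc' hcc
    rw [← (hfspec c hc).2, ← (hfspec c' hc').2, hcc]
  have hBbound : B.card ≤ (T.erase x).card :=
    Finset.card_le_card_of_injOn f hfmem hinj
  -- lower bounds for the missing sets
  have hmissx : Δ + 1 ≤ (miss Hp Δ φ x).card + (H.neighborSet x).ncard := by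
    have h1 := card_miss (Hp := Hp) (Δ := Δ) (φ := φ) (v := x)
    have h2 : (Hp.neighborSet x).ncard = (H.neighborSet x).ncard - 1 := by
      rw [hHp, HD_nbr_x hxy]
      exact Set.ncard_diff_singleton_of_mem hxy
    have h3 : 1 ≤ (H.neighborSet x).ncard :=
      (Set.ncard_pos (Set.toFinite _)).2 ⟨y, hxy⟩
    omega
  have hmissw : ∀ w : V, Δ ≤ (miss Hp Δ φ w).card + (H.neighborSet w).ncard := by
    intro w
    have h1 := card_miss (Hp := Hp) (Δ := Δ) (φ := φ) (v := w)
    have h2 : (Hp.neighborSet w).ncard ≤ (H.neighborSet w).ncard :=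
      Set.ncard_le_ncard (fun u hu => (deleteEdges_adj.1 hu).1) (Set.toFinite _)
    omega
  -- split T.erase x into degree-Δ vertices and the rest
  set D := (T.erase x).filter (fun w => (H.neighborSet w).ncard = Δ) with hD
  set R := (T.erase x).filter (fun w => ¬ (H.neighborSet w).ncard = Δ) with hR
  have hsplit : D.card + R.card = (T.erase x).card :=
    Finset.card_filter_add_card_filter_not _
  have hsum1 : ∑ w ∈ T.erase x, (miss Hp Δ φ w).card + (miss Hp Δ φ x).card
      = ∑ w ∈ T, (miss Hp Δ φ w).card := Finset.sum_erase_add T _ hxT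
  have hsum2 : ∑ w ∈ D, (miss Hp Δ φ w).card + ∑ w ∈ R, (miss Hp Δ φ w).card
      = ∑ w ∈ T.erase x, (miss Hp Δ φ w).card :=
    Finset.sum_filter_add_sum_filter_not _ _ _
  have hsumR : R.card ≤ ∑ w ∈ R, (miss Hp Δ φ w).card := by
    have : ∀ w ∈ R, 1 ≤ (miss Hp Δ φ w).card := by
      intro w hw
      rw [hR, Finset.mem_filter] at hw
      have h1 := hmissw w
      have h2 := hdeg w
      have h3 := hw.2
      omega
    calc R.card = ∑ _w ∈ R, 1 := by simp
      _ ≤ _ := Finset.sum_le_sum this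
  have hDx : (miss Hp Δ φ x).card ≤ D.card := by omega
  -- D injects into the target set
  have hDsub : (D : Set V) ⊆ {z : V | H.Adj y z ∧ (H.neighborSet z).ncard = Δ ∧ z ≠ x} := by
    intro w hw
    rw [hD] at hw
    simp only [Finset.coe_filter, Set.mem_setOf_eq, Finset.mem_erase] at hw
    obtain ⟨⟨hwx, hwT⟩, hwΔ⟩ := hw
    exact ⟨fan_mem_adj hxy hfl (List.mem_toFinset.1 hwT), hwΔ, hwx⟩
  have hfinal : D.card ≤ {z : V | H.Adj y z ∧ (H.neighborSet z).ncard = Δ ∧ z ≠ x}.ncard := by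
    rw [← Set.ncard_coe_finset]
    exact Set.ncard_le_ncard hDsub (Set.toFinite _)
  omega

end VAL

/-! ### critical subgraphs and assembly -/

section Assembly

lemma EC_mono {H1 H2 : SimpleGraph V} (h : H1 ≤ H2) {k : ℕ} (he : EC H2 k) : EC H1 k :=
  he.imp (fun _ hC => proper_mono h hC)

lemma EC_empty {H : SimpleGraph V} (h : H.edgeSet = ∅) (k : ℕ) : EC H k :=
  ⟨fun _ => 0, fun e he => absurd (h ▸ he) (Set.notMem_empty e),
    fun e he => absurd (h ▸ he) (Set.notMem_empty e)⟩

lemma exists_critical (G : SimpleGraph V) (Δ : ℕ) (hG : ¬ EC G Δ) :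
    ∃ H : SimpleGraph V, H ≤ G ∧ ¬ EC H Δ ∧ ∀ e ∈ H.edgeSet, EC (H.deleteEdges {e}) Δ := by
  classical
  set S := {n | ∃ H : SimpleGraph V, H ≤ G ∧ ¬ EC H Δ ∧ H.edgeSet.ncard = n} with hS
  have hne : S.Nonempty := ⟨_, G, le_rfl, hG, rfl⟩
  obtain ⟨H, hHG, hHnc, hHcard⟩ := Nat.sInf_mem hne
  refine ⟨H, hHG, hHnc, ?_⟩
  intro e he
  by_contra hno
  have hle : H.deleteEdges {e} ≤ G := le_trans (H.deleteEdges_le _) hHG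
  have hlt : (H.deleteEdges {e}).edgeSet.ncard < sInf S := by
    rw [edgeSet_deleteEdges, ← hHcard]
    exact Set.ncard_diff_singleton_lt_of_mem he (Set.toFinite _)
  have hmem : (H.deleteEdges {e}).edgeSet.ncard ∈ S := ⟨H.deleteEdges {e}, hle, hno, rfl⟩
  have := Nat.sInf_le hmem
  omega

lemma ncard_nbr (G : SimpleGraph V) [DecidableRel G.Adj] (v : V) :
    (G.neighborSet v).ncard = G.degree v := by
  rw [← card_neighborFinset_eq_degree, neighborFinset_def,
    Set.ncard_eq_toFinset_card']

end Assembly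
end HZ

open HZ in
/-- If `G` is an HZ-graph with maximum degree `Δ ≥ 3`, then every vertex of `G` has
degree `Δ` or `Δ − 1`; in particular `δ(G) = Δ − 1`. -/
theorem hz_min_degree {V : Type*} [Fintype V] [DecidableEq V]
    (G : SimpleGraph V) [DecidableRel G.Adj]
    (hΔ : 3 ≤ G.maxDegree)
    (hconn : G.Connected)
    (hclass2 : chromaticIndex G = G.maxDegree + 1)
    (hcore : ∀ v : V, G.degree v = G.maxDegree →
      ((G.neighborFinset v).filter (fun w => G.degree w = G.maxDegree)).card ≤ 2) :
    (∀ v : V, G.degree v = G.maxDegree ∨ G.degree v = G.maxDegree - 1) ∧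
      G.minDegree = G.maxDegree - 1 := by
  classical
  haveI : Nonempty V := hconn.nonempty
  set Δ := G.maxDegree with hΔdef
  have hnc : ¬ EC G Δ := by
    rintro ⟨C, hC⟩
    have hmem : Δ ∈ {k | ∃ C, IsProperEdgeColoring G k C} := ⟨C, hC⟩
    have hle : chromaticIndex G ≤ Δ := Nat.sInf_le hmem
    omega
  obtain ⟨H, hHG, hHnc, hHcrit⟩ := exists_critical G Δ hnc
  have hHadj : ∀ {a b : V}, H.Adj a b → G.Adj a b := fun h => hHG h
  have hnbr_sub : ∀ v : V, H.neighborSet v ⊆ G.neighborSet v := fun v w hw => hHG hw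
  have hdH_le : ∀ v, (H.neighborSet v).ncard ≤ G.degree v := by
    intro v
    calc (H.neighborSet v).ncard ≤ (G.neighborSet v).ncard :=
          Set.ncard_le_ncard (hnbr_sub v) (Set.toFinite _)
      _ = G.degree v := ncard_nbr G v
  have hdegH : ∀ v, (H.neighborSet v).ncard ≤ Δ := fun v =>
    le_trans (hdH_le v) (G.degree_le_maxDegree v)
  have hVAL : ∀ a b : V, H.Adj a b →
      Δ + 1 ≤ (H.neighborSet a).ncard +
        {z : V | H.Adj b z ∧ (H.neighborSet z).ncard = Δ ∧ z ≠ a}.ncard := by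
    intro a b hab
    exact VAL hab hHnc hdegH (hHcrit s(a, b) (H.mem_edgeSet.2 hab))
  have hGdeg : ∀ z, (H.neighborSet z).ncard = Δ → G.degree z = Δ := fun z hz =>
    le_antisymm (G.degree_le_maxDegree z) (hz ▸ hdH_le z)
  have hcore' : ∀ z, G.degree z = Δ → {w : V | G.Adj z w ∧ G.degree w = Δ}.ncard ≤ 2 := by
    intro z hz
    have hseteq : {w : V | G.Adj z w ∧ G.degree w = Δ}
        = ((G.neighborFinset z).filter (fun w => G.degree w = Δ) : Finset V) := by
      ext w
      simp [mem_neighborFinset]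
    rw [hseteq, Set.ncard_coe_finset]
    exact hcore z hz
  have hdeg_ge : ∀ u z : V, H.Adj u z → (H.neighborSet z).ncard = Δ →
      Δ - 1 ≤ (H.neighborSet u).ncard := by
    intro u z huz hz
    have h1 := hVAL u z huz
    have h2 : {w : V | H.Adj z w ∧ (H.neighborSet w).ncard = Δ ∧ w ≠ u}.ncard ≤ 2 := by
      refine le_trans (Set.ncard_le_ncard ?_ (Set.toFinite _)) (hcore' z (hGdeg z hz))
      rintro w ⟨hw1, hw2, -⟩
      exact ⟨hHadj hw1, hGdeg w hw2⟩
    omega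
  have hΔnbr : ∀ u w : V, H.Adj u w → ∃ z, H.Adj u z ∧ (H.neighborSet z).ncard = Δ := by
    intro u w huw
    have h1 := hVAL w u huw.symm
    have h2 := hdegH w
    obtain ⟨z, hz⟩ := Set.nonempty_of_ncard_ne_zero
      (s := {z : V | H.Adj u z ∧ (H.neighborSet z).ncard = Δ ∧ z ≠ w}) (by omega)
    exact ⟨z, hz.1, hz.2.1⟩
  have hkey : ∀ u v w : V, G.Adj u v → ¬ H.Adj u v → H.Adj u w → False := by
    intro u v w huv hnuv huw
    obtain ⟨z, hz1, hz2⟩ := hΔnbr u w huw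
    have h7 := hdeg_ge u z hz1 hz2
    have hvnot : v ∉ H.neighborSet u := fun h => hnuv ((H.mem_neighborSet u v).1 h)
    have hins : insert v (H.neighborSet u) ⊆ G.neighborSet u := by
      intro t ht
      rcases Set.mem_insert_iff.1 ht with rfl | ht
      · exact huv
      · exact hnbr_sub u ht
    have hcard1 : (H.neighborSet u).ncard + 1 ≤ G.degree u := by
      calc (H.neighborSet u).ncard + 1 = (insert v (H.neighborSet u)).ncard :=
            (Set.ncard_insert_of_notMem hvnot (Set.toFinite _)).symm
        _ ≤ (G.neighborSet u).ncard := Set.ncard_le_ncard hins (Set.toFinite _)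
        _ = G.degree u := ncard_nbr G u
    have hdGu : G.degree u ≤ Δ := G.degree_le_maxDegree u
    have hGu : G.degree u = Δ := by omega
    have h1 := hVAL u z hz1
    have h2 : 2 ≤ {w' : V | H.Adj z w' ∧ (H.neighborSet w').ncard = Δ ∧ w' ≠ u}.ncard := by
      omega
    have husz : u ∉ {w' : V | H.Adj z w' ∧ (H.neighborSet w').ncard = Δ ∧ w' ≠ u} :=
      fun h => h.2.2 rfl
    have hins2 : insert u {w' : V | H.Adj z w' ∧ (H.neighborSet w').ncard = Δ ∧ w' ≠ u}
        ⊆ {w' : V | G.Adj z w' ∧ G.degree w' = Δ} := by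
      intro t ht
      rcases Set.mem_insert_iff.1 ht with rfl | ht
      · exact ⟨hHadj hz1.symm, hGu⟩
      · exact ⟨hHadj ht.1, hGdeg _ ht.2.1⟩
    have h3 : 3 ≤ (insert u {w' : V | H.Adj z w' ∧ (H.neighborSet w').ncard = Δ ∧ w' ≠ u}).ncard := by
      rw [Set.ncard_insert_of_notMem husz (Set.toFinite _)]
      omega
    have h4 := Set.ncard_le_ncard hins2 (Set.toFinite _)
    have h5 := hcore' z (hGdeg z hz2)
    omega
  have hHedge : ∃ a b : V, H.Adj a b := by
    by_contra hno
    push_neg at hno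
    refine hHnc (EC_empty ?_ Δ)
    ext e
    induction e with
    | _ a b =>
      simp only [mem_edgeSet, Set.mem_empty_iff_false, iff_false]
      exact hno a b
  obtain ⟨x0, y0, hx0⟩ := hHedge
  obtain ⟨vm, hvm⟩ := G.exists_maximal_degree_vertex
  have hsupp : ∀ u, ∃ w, H.Adj u w := by
    intro u
    have hreach : G.Reachable x0 u := hconn.preconnected x0 u
    refine closed_reach (K := G) (S := {t | ∃ w, H.Adj t w}) ?_ hreach ⟨y0, hx0⟩
    rintro t ⟨w, hw⟩ w' htw'
    by_cases h : H.Adj t w'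
    · exact ⟨t, h.symm⟩
    · exact (hkey t w' w htw' h hw).elim
  have hmain : ∀ v, Δ - 1 ≤ G.degree v := by
    intro v
    obtain ⟨w, hw⟩ := hsupp v
    obtain ⟨z, hz1, hz2⟩ := hΔnbr v w hw
    have h1 := hdeg_ge v z hz1 hz2
    have h2 := hdH_le v
    omega
  have part1 : ∀ v, G.degree v = Δ ∨ G.degree v = Δ - 1 := by
    intro v
    have h1 := G.degree_le_maxDegree v
    have h2 := hmain v
    omega
  have hnotreg : ∃ v, G.degree v ≠ Δ := by
    by_contra hall
    push_neg at hall
    have h2 := hcore vm hvm.symm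
    rw [Finset.filter_true_of_mem (fun w _ => hall w), card_neighborFinset_eq_degree] at h2
    omega
  refine ⟨part1, ?_⟩
  obtain ⟨v, hv⟩ := hnotreg
  have hv1 : G.degree v = Δ - 1 := by
    rcases part1 v with h | h
    · exact absurd h hv
    · exact h
  have h1 : G.minDegree ≤ Δ - 1 := hv1 ▸ G.minDegree_le_degree v
  have h2 : Δ - 1 ≤ G.minDegree := G.le_minDegree_of_forall_le_degree _ hmain
  omega
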